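/- Let (M,ω) be pseudo-prequantisable with curvature form Ω and let {βᵢ} be smooth functions whose Hamiltonian vector fields span a polarisation P. An operator ᾰ = -iħ∇_{X_α} + α preserves the space of P-polarised sections (ker ∇_{X_{βᵢ}} for all i) if and only if for each i and every polarised ψ: (\{α,βᵢ\})̆ ψ = Ω(X_α, X_{βᵢ}) ψ. -/

import Mathlib

/-!
On a section `ψ` with `∇_{X_β} ψ = 0` we have
`∇_{X_β} (ᾰ ψ) = [∇_{X_β}, ᾰ] ψ`, and the commutator is computed from the curvature identity
`iħ [∇_{X_α}, ∇_{X_β}] = Ω(X_α, X_β) + iħ ∇_{X_{α,β}}` together with the Leibniz rule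
`[∇_{X_β}, α] = {β, α} = -{α, β}`:
`[∇_{X_β}, ᾰ] = Ω(X_α, X_β) - ({α, β})̆`.
So `ᾰ ψ` is again polarised exactly when `({α, β})̆ ψ = Ω(X_α, X_β) ψ`.
-/

/-- The pseudo-prequantum operator `ğ = -iħ∇_{X_g} + g`. -/
noncomputable def preOp {M S VF : Type*} [AddCommGroup S] [Module ℂ S]
    (hbar : ℝ) (X : (M → ℝ) → VF) (nabla : VF → Module.End ℂ S)
    (mul : (M → ℝ) → Module.End ℂ S) (A : M → ℝ) : Module.End ℂ S :=
  (-(Complex.I * hbar)) • nabla (X A) + mul A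

section Commutator

variable {M S VF : Type*} [AddCommGroup S] [Module ℂ S] {hbar : ℝ} {X : (M → ℝ) → VF}
  {bracket : VF → VF → VF} {pois : (M → ℝ) → (M → ℝ) → (M → ℝ)} {Ω : VF → VF → (M → ℝ)}
  {vact : VF → (M → ℝ) → (M → ℝ)} {nabla : VF → Module.End ℂ S}
  {mul : (M → ℝ) → Module.End ℂ S}

theorem commutator_nabla_preOp
    (hmul_neg : ∀ g : M → ℝ, mul (-g) = -mul g)
    (hcurv : ∀ v w : VF,
      ((Complex.I * hbar) • (nabla v * nabla w - nabla w * nabla v - nabla (bracket v w))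
        : Module.End ℂ S) = mul (Ω v w))
    (hX : ∀ A B : M → ℝ, X (pois A B) = bracket (X A) (X B))
    (hLeib : ∀ (v : VF) (g : M → ℝ), nabla v * mul g - mul g * nabla v = mul (vact v g))
    (hvact : ∀ A B : M → ℝ, vact (X A) B = pois A B)
    (hanti : ∀ A B : M → ℝ, pois B A = -pois A B) (A B : M → ℝ) :
    nabla (X B) * preOp hbar X nabla mul A - preOp hbar X nabla mul A * nabla (X B) =
      mul (Ω (X A) (X B)) - preOp hbar X nabla mul (pois A B) := by
  have hmul : nabla (X B) * mul A - mul A * nabla (X B) = -mul (pois A B) := by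
    rw [hLeib, hvact, hanti, hmul_neg]
  have hnabla : (Complex.I * hbar) • (nabla (X A) * nabla (X B) - nabla (X B) * nabla (X A)) =
      mul (Ω (X A) (X B)) + (Complex.I * hbar) • nabla (X (pois A B)) := by
    rw [← hcurv, hX]
    module
  calc nabla (X B) * preOp hbar X nabla mul A - preOp hbar X nabla mul A * nabla (X B)
      = (Complex.I * hbar) • (nabla (X A) * nabla (X B) - nabla (X B) * nabla (X A)) +
          (nabla (X B) * mul A - mul A * nabla (X B)) := by
        simp only [preOp, mul_add, add_mul, mul_smul_comm, smul_mul_assoc]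
        module
    _ = mul (Ω (X A) (X B)) - preOp hbar X nabla mul (pois A B) := by
        rw [hnabla, hmul, preOp]
        module

theorem nabla_preOp_apply_of_nabla_eq_zero
    (hmul_neg : ∀ g : M → ℝ, mul (-g) = -mul g)
    (hcurv : ∀ v w : VF,
      ((Complex.I * hbar) • (nabla v * nabla w - nabla w * nabla v - nabla (bracket v w))
        : Module.End ℂ S) = mul (Ω v w))
    (hX : ∀ A B : M → ℝ, X (pois A B) = bracket (X A) (X B))
    (hLeib : ∀ (v : VF) (g : M → ℝ), nabla v * mul g - mul g * nabla v = mul (vact v g))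
    (hvact : ∀ A B : M → ℝ, vact (X A) B = pois A B)
    (hanti : ∀ A B : M → ℝ, pois B A = -pois A B) {A B : M → ℝ} {ψ : S}
    (hψ : nabla (X B) ψ = 0) :
    nabla (X B) (preOp hbar X nabla mul A ψ) =
      mul (Ω (X A) (X B)) ψ - preOp hbar X nabla mul (pois A B) ψ := by
  have h := LinearMap.congr_fun
    (commutator_nabla_preOp hmul_neg hcurv hX hLeib hvact hanti A B) ψ
  simpa only [LinearMap.sub_apply, Module.End.mul_apply, hψ, map_zero, sub_zero] using h

end Commutator

theorem stmt10_general {M S VF ι : Type*} [AddCommGroup S] [Module ℂ S]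
    (hbar : ℝ)
    (X : (M → ℝ) → VF) (bracket : VF → VF → VF)
    (pois : (M → ℝ) → (M → ℝ) → (M → ℝ))
    (Ω : VF → VF → (M → ℝ))
    (vact : VF → (M → ℝ) → (M → ℝ))
    (nabla : VF → Module.End ℂ S)
    (mul : (M → ℝ) → Module.End ℂ S)
    (hmul_neg : ∀ g : M → ℝ, mul (-g) = -mul g)
    -- curvature condition curv(∇) = Ω
    (hcurv : ∀ v w : VF,
      ((Complex.I * hbar) • (nabla v * nabla w - nabla w * nabla v - nabla (bracket v w))
        : Module.End ℂ S) = mul (Ω v w))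
    (hX : ∀ A B : M → ℝ, X (pois A B) = bracket (X A) (X B))
    (hLeib : ∀ (v : VF) (g : M → ℝ), nabla v * mul g - mul g * nabla v = mul (vact v g))
    (hvact : ∀ A B : M → ℝ, vact (X A) B = pois A B)
    (hanti : ∀ A B : M → ℝ, pois B A = -pois A B)
    -- the functions βᵢ generating the polarisation P = span{X_{βᵢ}}, and the observable α
    (β : ι → (M → ℝ)) (α : M → ℝ) :
    -- ᾰ preserves the polarised sections ...
    (∀ ψ : S, (∀ i, nabla (X (β i)) ψ = 0) →
      ∀ i, nabla (X (β i)) (preOp hbar X nabla mul α ψ) = 0)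
    ↔ -- ... iff for each i and every polarised ψ, ({α,βᵢ})̆ ψ = Ω(X_α,X_{βᵢ}) ψ
    (∀ ψ : S, (∀ i, nabla (X (β i)) ψ = 0) →
      ∀ i, preOp hbar X nabla mul (pois α (β i)) ψ = mul (Ω (X α) (X (β i))) ψ) := by
  refine forall_congr' fun ψ => imp_congr_right fun hψ => forall_congr' fun i => ?_
  rw [nabla_preOp_apply_of_nabla_eq_zero hmul_neg hcurv hX hLeib hvact hanti (hψ i),
    sub_eq_zero, eq_comm]

theorem stmt10 {M S VF ι : Type*} [AddCommGroup S] [Module ℂ S]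
    (hbar : ℝ) (hbar_ne : hbar ≠ 0)
    (X : (M → ℝ) → VF) (bracket : VF → VF → VF)
    (pois : (M → ℝ) → (M → ℝ) → (M → ℝ))
    (Ω : VF → VF → (M → ℝ))
    (vact : VF → (M → ℝ) → (M → ℝ))
    (nabla : VF → Module.End ℂ S)
    (mul : (M → ℝ) → Module.End ℂ S)
    (hmul_add : ∀ g h : M → ℝ, mul (g + h) = mul g + mul h)
    (hmul_neg : ∀ g : M → ℝ, mul (-g) = -mul g)
    -- curvature condition curv(∇) = Ω
    (hcurv : ∀ v w : VF,
      ((Complex.I * hbar) • (nabla v * nabla w - nabla w * nabla v - nabla (bracket v w))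
        : Module.End ℂ S) = mul (Ω v w))
    (hX : ∀ A B : M → ℝ, X (pois A B) = bracket (X A) (X B))
    (hLeib : ∀ (v : VF) (g : M → ℝ), nabla v * mul g - mul g * nabla v = mul (vact v g))
    (hvact : ∀ A B : M → ℝ, vact (X A) B = pois A B)
    (hanti : ∀ A B : M → ℝ, pois B A = -pois A B)
    -- the functions βᵢ generating the polarisation P = span{X_{βᵢ}}, and the observable α
    (β : ι → (M → ℝ)) (α : M → ℝ) :
    -- ᾰ preserves the polarised sections ...
    (∀ ψ : S, (∀ i, nabla (X (β i)) ψ = 0) →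
      ∀ i, nabla (X (β i)) (preOp hbar X nabla mul α ψ) = 0)
    ↔ -- ... iff for each i and every polarised ψ, ({α,βᵢ})̆ ψ = Ω(X_α,X_{βᵢ}) ψ
    (∀ ψ : S, (∀ i, nabla (X (β i)) ψ = 0) →
      ∀ i, preOp hbar X nabla mul (pois α (β i)) ψ = mul (Ω (X α) (X (β i))) ψ) :=
  stmt10_general hbar X bracket pois Ω vact nabla mul hmul_neg hcurv hX hLeib hvact hanti β α
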